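/- arXiv:math/0201227 — 2 statements merged into one kernel-verified Lean document; each statement's English description precedes it below -/
import Mathlib

section
/- Let j₀ ≥ 3 be an integer and a > 2, and let v(n) = a if n = j₀ and v(n) = 0 otherwise. Then the set of real eigenvalues λ of H with |λ| > 2 is a singleton {λ_a}, and this unique eigenvalue satisfies a < λ_a < a + 2/a. -/
noncomputable section

/-- ℓ²(ℤ⁺), modelled with 0-based indexing: coordinate `n : ℕ` is site `n+1`. -/
abbrev H2 : Type := lp (fun _ : ℕ => ℂ) 2

/-- The standard orthonormal basis vector δ_{n+1}. -/
noncomputable def e (n : ℕ) : H2 := lp.single 2 n 1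

/-!
Write `λ = ρ + ρ⁻¹` with `0 < |ρ| < 1`. The equation `Hu = λu` is a second-order recurrence, so its
solutions are the multiples of the one solution `φ` with `φ 0 = 1`, and `λ` is an eigenvalue iff
`φ ∈ ℓ²`. Before the site `j₀` the recurrence is free and `φ` is a combination of `ρ^{±n}`; after
it, square summability forces pure decay `φ (n + 1) = ρ φ n`. Matching the two at `j₀` gives the
secular equation `a ρ (1 - ρ^{2 j₀}) = 1 - ρ²`, i.e. `a ∑_{k < j₀} ρ^{2k+1} = 1`. Its left side is
strictly increasing in `ρ`, so it has exactly one root `r`, which lies in `(0, 1/a)`, and then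
`λ = r + r⁻¹ = a + 2r - a r^{2 j₀}` lies in `(a, a + 2/a)`.
-/

open Filter Topology

lemma inner_e_left (w : H2) (j : ℕ) : inner ℂ (e j) w = w j := by
  simp [e, lp.inner_single_left, RCLike.inner_apply]

lemma hasSum_mul_inner_e_apply (H : H2 →L[ℂ] H2) (u : H2) (j : ℕ) :
    HasSum (fun l => u l * inner ℂ (e j) (H (e l))) (H u j) := by
  have hu : HasSum (fun l => (u l : ℂ) • e l) u := by
    simpa [e, ← lp.single_smul] using lp.hasSum_single (by norm_num) u
  rw [← inner_e_left]
  simpa [inner_smul_right, mul_comm] using (innerSL ℂ (e j)).hasSum (H.hasSum hu)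

lemma apply_eq_sum_of_inner_eq_zero (H : H2 →L[ℂ] H2) (u : H2) (j : ℕ) (s : Finset ℕ)
    (hs : ∀ l ∉ s, inner ℂ (e j) (H (e l)) = 0) :
    H u j = ∑ l ∈ s, u l * inner ℂ (e j) (H (e l)) :=
  (hasSum_mul_inner_e_apply H u j).unique <|
    hasSum_sum_of_ne_finset_zero fun l hl => by simp [hs l hl]

def IsSchrodinger (v : ℕ → ℝ) (H : H2 →L[ℂ] H2) : Prop :=
  ∀ j l : ℕ, inner ℂ (e j) (H (e l)) =
    if j = l then (v j : ℂ) else if j = l + 1 ∨ l = j + 1 then 1 else 0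

/-- The solution of `φ (n + 1) + v n * φ n + φ (n - 1) = x * φ n` with `φ (-1) = 0`, `φ 0 = 1`. -/
def eigenSeq (v : ℕ → ℝ) (x : ℂ) : ℕ → ℂ
  | 0 => 1
  | 1 => x - v 0
  | n + 2 => (x - v (n + 1)) * eigenSeq v x (n + 1) - eigenSeq v x n

lemma eigenSeq_add_two (v : ℕ → ℝ) (x : ℂ) (n : ℕ) :
    eigenSeq v x (n + 2) = (x - v (n + 1)) * eigenSeq v x (n + 1) - eigenSeq v x n := rfl

namespace IsSchrodinger

variable {v : ℕ → ℝ} {H : H2 →L[ℂ] H2}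

lemma apply_zero (hH : IsSchrodinger v H) (u : H2) : H u 0 = u 1 + v 0 * u 0 := by
  rw [apply_eq_sum_of_inner_eq_zero H u 0 {0, 1}]
  · simp [hH 0 0, hH 0 1, add_comm, mul_comm]
  · intro l hl
    simp only [Finset.mem_insert, Finset.mem_singleton] at hl
    rw [hH, if_neg (by omega), if_neg (by omega)]

lemma apply_succ (hH : IsSchrodinger v H) (u : H2) (n : ℕ) :
    H u (n + 1) = u (n + 2) + v (n + 1) * u (n + 1) + u n := by
  rw [apply_eq_sum_of_inner_eq_zero H u (n + 1) {n, n + 1, n + 2}]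
  · simp [hH (n + 1) n, hH (n + 1) (n + 1), hH (n + 1) (n + 2), add_comm, mul_comm,
      add_left_comm]
  · intro l hl
    simp only [Finset.mem_insert, Finset.mem_singleton] at hl
    rw [hH, if_neg (by omega), if_neg (by omega)]

lemma apply_eq_smul_iff (hH : IsSchrodinger v H) (u : H2) (x : ℂ) :
    H u = x • u ↔ ⇑u = u 0 • eigenSeq v x := by
  constructor
  · intro hu
    have h0 := hH.apply_zero u
    have hs := hH.apply_succ u
    simp only [hu, lp.coeFn_smul, Pi.smul_apply, smul_eq_mul] at h0 hs
    funext n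
    induction n using Nat.twoStepInduction with
    | zero => simp [eigenSeq]
    | one => simp only [Pi.smul_apply, smul_eq_mul, eigenSeq]; linear_combination -h0
    | more n ih₀ ih₁ =>
      simp only [Pi.smul_apply, smul_eq_mul, eigenSeq] at ih₀ ih₁ ⊢
      linear_combination -hs n + (x - v (n + 1)) * ih₁ - ih₀
  · generalize u 0 = c
    intro hu
    ext n
    rcases n with _ | n
    · simp only [hH.apply_zero, hu, lp.coeFn_smul, Pi.smul_apply, smul_eq_mul, eigenSeq]; ring
    · simp only [hH.apply_succ, hu, lp.coeFn_smul, Pi.smul_apply, smul_eq_mul, eigenSeq]; ring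

lemma hasEigenvector_iff (hH : IsSchrodinger v H) (x : ℂ) :
    (∃ u : H2, u ≠ 0 ∧ H u = x • u) ↔ Memℓp (eigenSeq v x) 2 := by
  constructor
  · rintro ⟨u, hu0, hu⟩
    have hu' := (hH.apply_eq_smul_iff u x).1 hu
    generalize u 0 = c at hu'
    have hc : c ≠ 0 := fun hc => hu0 <| lp.ext <| by rw [hu', hc, zero_smul]; rfl
    simpa [hu', smul_smul, hc] using (lp.memℓp u).const_smul c⁻¹
  · intro hφ
    refine ⟨⟨_, hφ⟩, fun h => ?_, (hH.apply_eq_smul_iff _ x).2 ?_⟩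
    · simpa [eigenSeq] using congrArg (fun w : H2 => w 0) h
    · simp [eigenSeq]

end IsSchrodinger

lemma Memℓp.tendsto_norm_cofinite {α : Type*} {E : α → Type*} [∀ i, NormedAddCommGroup (E i)]
    {p : ENNReal} {f : ∀ i, E i} (hf : Memℓp f p) (hp : 0 < p.toReal) :
    Tendsto (fun i => ‖f i‖) cofinite (𝓝 0) := by
  have h := (hf.summable hp).tendsto_cofinite_zero.rpow_const (p := p.toReal⁻¹)
    (Or.inr (inv_nonneg.2 hp.le))
  simpa [← Real.rpow_mul (norm_nonneg _), hp.ne', Real.zero_rpow (inv_ne_zero hp.ne')] using h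

section FreeRecurrence

variable {v : ℕ → ℝ} {ρ : ℂ}

lemma eigenSeq_mul_inv_sub {p : ℕ} (hv : ∀ n < p, v n = 0) (hρ : ρ ≠ 0) :
    ∀ n ≤ p, eigenSeq v (ρ + ρ⁻¹) n * (ρ⁻¹ - ρ) = ρ⁻¹ ^ (n + 1) - ρ ^ (n + 1) := by
  have hρρ : ρ * ρ⁻¹ = 1 := mul_inv_cancel₀ hρ
  intro n
  induction n using Nat.twoStepInduction with
  | zero => simp [eigenSeq]
  | one =>
    intro hp
    simp only [eigenSeq, hv 0 hp, Complex.ofReal_zero, sub_zero]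
    ring
  | more n ih₀ ih₁ =>
    intro hp
    rw [eigenSeq_add_two, hv (n + 1) (by omega), Complex.ofReal_zero, sub_zero]
    linear_combination (ρ + ρ⁻¹) * ih₁ (by omega) - ih₀ (by omega)
      + (ρ⁻¹ ^ (n + 1) - ρ ^ (n + 1)) * hρρ

lemma memℓp_eigenSeq_iff {p : ℕ} (hv : ∀ n, p < n → v n = 0) (hρ0 : ρ ≠ 0) (hρ1 : ‖ρ‖ < 1) :
    Memℓp (eigenSeq v (ρ + ρ⁻¹)) 2 ↔
      eigenSeq v (ρ + ρ⁻¹) (p + 1) = ρ * eigenSeq v (ρ + ρ⁻¹) p := by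
  set φ := eigenSeq v (ρ + ρ⁻¹)
  -- `d` is multiplied by `ρ⁻¹` at each step, so it can only tend to `0` if it vanishes.
  set d : ℕ → ℂ := fun k => φ (p + k + 1) - ρ * φ (p + k)
  have hd : ∀ k, d k = ρ * d (k + 1) := by
    intro k
    simp only [d, φ, ← add_assoc, eigenSeq_add_two, hv (p + k + 1) (by omega),
      Complex.ofReal_zero, sub_zero]
    linear_combination -φ (p + k + 1) * mul_inv_cancel₀ hρ0
  rw [← sub_eq_zero]
  change _ ↔ d 0 = 0
  constructor
  · intro hφ
    have hφ0 : Tendsto φ atTop (𝓝 0) := by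
      rw [tendsto_zero_iff_norm_tendsto_zero, ← Nat.cofinite_eq_atTop]
      exact hφ.tendsto_norm_cofinite (by norm_num)
    have hd0 : Tendsto (fun k => ‖d k‖) atTop (𝓝 0) := by
      have h := ((hφ0.comp (tendsto_add_atTop_nat (p + 1))).sub
        ((hφ0.comp (tendsto_add_atTop_nat p)).const_mul ρ)).norm
      rw [mul_zero, sub_zero, norm_zero] at h
      exact h.congr fun k => by simp only [d, Function.comp_apply]; ring_nf
    have hmono : Monotone fun k => ‖d k‖ := monotone_nat_of_le_succ fun k => by
      rw [hd k, norm_mul]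
      exact mul_le_of_le_one_left (norm_nonneg _) hρ1.le
    exact norm_le_zero_iff.1 (hmono.ge_of_tendsto hd0 0)
  · intro h0
    have hdk : ∀ k, d k = 0 := by
      intro k
      induction k with
      | zero => exact h0
      | succ k ih => simpa [hρ0, hd k] using ih
    have hgeom : ∀ k, φ (p + k) = ρ ^ k * φ p := by
      intro k
      induction k with
      | zero => simp
      | succ k ih => linear_combination hdk k + ρ * ih
    rw [memℓp_gen_iff (by norm_num), ← summable_nat_add_iff p]
    have hρ2 : ‖ρ‖ ^ 2 < 1 := pow_lt_one₀ (norm_nonneg _) hρ1 two_ne_zero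
    refine ((summable_geometric_of_lt_one (by positivity) hρ2).mul_left (‖φ p‖ ^ 2)).congr
      fun n => ?_
    rw [add_comm, hgeom, norm_mul, norm_pow, ENNReal.toReal_ofNat, Real.rpow_ofNat]
    ring

lemma eigenSeq_succ_eq_mul_iff {q : ℕ} {a : ℝ} (hv : ∀ n < q + 1, v n = 0) (hva : v (q + 1) = a)
    (hρ0 : ρ ≠ 0) (hρ2 : ρ ^ 2 ≠ 1) :
    eigenSeq v (ρ + ρ⁻¹) (q + 2) = ρ * eigenSeq v (ρ + ρ⁻¹) (q + 1) ↔
      a * ρ * (1 - ρ ^ (2 * (q + 2))) = 1 - ρ ^ 2 := by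
  set φ := eigenSeq v (ρ + ρ⁻¹)
  have hφ₁ := eigenSeq_mul_inv_sub hv hρ0 (q + 1) le_rfl
  have hφ₀ := eigenSeq_mul_inv_sub hv hρ0 q (by omega)
  have hne : (ρ⁻¹ - ρ) * ρ ^ (q + 3) ≠ 0 := by
    refine mul_ne_zero (fun h => hρ2 ?_) (pow_ne_zero _ hρ0)
    field_simp at h
    linear_combination -h
  have key : (φ (q + 2) - ρ * φ (q + 1)) * ((ρ⁻¹ - ρ) * ρ ^ (q + 3)) =
      1 - ρ ^ 2 - a * ρ * (1 - ρ ^ (2 * (q + 2))) := by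
    calc _ = ((ρ⁻¹ - a) * (φ (q + 1) * (ρ⁻¹ - ρ)) - φ q * (ρ⁻¹ - ρ)) * ρ ^ (q + 3) := by
          rw [show φ (q + 2) = _ from eigenSeq_add_two v _ q, hva]; ring
      _ = ((ρ⁻¹ - a) * (ρ⁻¹ ^ (q + 2) - ρ ^ (q + 2)) - (ρ⁻¹ ^ (q + 1) - ρ ^ (q + 1))) *
          ρ ^ (q + 3) := by rw [hφ₁, hφ₀]
      _ = _ := by simp only [inv_pow]; field_simp; ring
  rw [← sub_eq_zero, ← (mul_left_injective₀ hne).eq_iff, zero_mul, key, sub_eq_zero, eq_comm]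

end FreeRecurrence

lemma IsSchrodinger.hasEigenvector_iff_of_single_site {v : ℕ → ℝ} {H : H2 →L[ℂ] H2}
    (hH : IsSchrodinger v H) {N : ℕ} {a : ℝ} (hN : 2 ≤ N)
    (hv : ∀ n, v n = if n + 1 = N then a else 0) {ρ : ℝ} (hρ0 : ρ ≠ 0) (hρ1 : |ρ| < 1) :
    (∃ u : H2, u ≠ 0 ∧ H u = ((ρ + ρ⁻¹ : ℝ) : ℂ) • u) ↔ a * ρ * (1 - ρ ^ (2 * N)) = 1 - ρ ^ 2 := by
  obtain ⟨q, rfl⟩ : ∃ q, N = q + 2 := ⟨N - 2, by omega⟩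
  have hρ0' : (ρ : ℂ) ≠ 0 := by exact_mod_cast hρ0
  have hρ2 : (ρ : ℂ) ^ 2 ≠ 1 := by
    exact_mod_cast ((sq_lt_one_iff_abs_lt_one ρ).2 hρ1).ne
  have hv' : ∀ n, n ≠ q + 1 → v n = 0 := fun n hn => by rw [hv, if_neg (by omega)]
  rw [hH.hasEigenvector_iff, Complex.ofReal_add, Complex.ofReal_inv,
    memℓp_eigenSeq_iff (p := q + 1) (fun n hn => hv' n (by omega)) hρ0' (by simpa using hρ1),
    eigenSeq_succ_eq_mul_iff (a := a) (fun n hn => hv' n (by omega)) (by simp [hv]) hρ0' hρ2]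
  exact_mod_cast Iff.rfl

section SecularEquation

open Finset

variable {a : ℝ} {N : ℕ}

lemma secular_iff_sum_eq_one {r : ℝ} (hr : r ^ 2 ≠ 1) :
    a * r * (1 - r ^ (2 * N)) = 1 - r ^ 2 ↔ a * ∑ k ∈ range N, r ^ (2 * k + 1) = 1 := by
  have hsum : (a * ∑ k ∈ range N, r ^ (2 * k + 1)) * (1 - r ^ 2) = a * r * (1 - r ^ (2 * N)) := by
    have hodd : ∑ k ∈ range N, r ^ (2 * k + 1) = (∑ k ∈ range N, (r ^ 2) ^ k) * r := by
      rw [sum_mul]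
      exact sum_congr rfl fun k _ => by ring
    rw [hodd, pow_mul, ← geom_sum_mul_neg (r ^ 2) N]
    ring
  have hne : 1 - r ^ 2 ≠ 0 := sub_ne_zero.2 hr.symm
  rw [← hsum]
  exact ⟨fun h => mul_right_cancel₀ hne (h.trans (one_mul _).symm), fun h => by rw [h, one_mul]⟩

lemma strictMono_mul_sum_odd_pow (ha : 0 < a) (hN : 1 ≤ N) :
    StrictMono fun r : ℝ => a * ∑ k ∈ range N, r ^ (2 * k + 1) := fun _ _ hxy =>
  mul_lt_mul_of_pos_left (sum_lt_sum_of_nonempty (nonempty_range_iff.2 (by omega))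
    fun k _ => Odd.strictMono_pow (odd_two_mul_add_one k) hxy) ha

lemma exists_secular_root (ha : 1 < a) (hN : 2 ≤ N) :
    ∃ r : ℝ, 0 < r ∧ r < 1 / a ∧ ∀ ρ : ℝ, |ρ| < 1 →
      (a * ρ * (1 - ρ ^ (2 * N)) = 1 - ρ ^ 2 ↔ ρ = r) := by
  set P : ℝ → ℝ := fun r => a * ∑ k ∈ range N, r ^ (2 * k + 1)
  have hP0 : P 0 = 0 := by simp [P]
  have hPa : 1 < P (1 / a) := by
    have hsub : ∑ k ∈ range 2, (1 / a) ^ (2 * k + 1) ≤ ∑ k ∈ range N, (1 / a) ^ (2 * k + 1) :=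
      sum_le_sum_of_subset_of_nonneg (range_mono hN) fun _ _ _ => by positivity
    have htwo : a * ∑ k ∈ range 2, (1 / a) ^ (2 * k + 1) = 1 + (1 / a) ^ 2 := by
      have ha0 : a ≠ 0 := by positivity
      simp only [sum_range_succ, sum_range_zero, zero_add, mul_zero, mul_one, Nat.reduceAdd]
      field_simp
    have hsq : 0 < (1 / a) ^ 2 := by positivity
    nlinarith [mul_le_mul_of_nonneg_left hsub (by linarith : (0 : ℝ) ≤ a)]
  obtain ⟨r, ⟨hr0, hra⟩, hPr⟩ := intermediate_value_Ioo (by positivity : (0 : ℝ) ≤ 1 / a)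
    (by fun_prop : Continuous P).continuousOn ⟨by rw [hP0]; exact one_pos, hPa⟩
  refine ⟨r, hr0, hra, fun ρ hρ1 => ?_⟩
  rw [secular_iff_sum_eq_one ((sq_lt_one_iff_abs_lt_one ρ).2 hρ1).ne]
  exact (strictMono_mul_sum_odd_pow (by linarith) (by omega)).injective.eq_iff' hPr

lemma add_inv_mem_Ioo_of_secular (ha : 0 < a) (hN : 1 ≤ N) {r : ℝ} (hr0 : 0 < r) (hr1 : r < 1)
    (hra : r < 1 / a) (h : a * r * (1 - r ^ (2 * N)) = 1 - r ^ 2) :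
    r + r⁻¹ ∈ Set.Ioo a (a + 2 / a) := by
  have hsum : r + r⁻¹ = a + 2 * r - a * r ^ (2 * N) := by
    field_simp
    linear_combination -h
  have hpow : a * r ^ (2 * N) ≤ a * r ^ 2 :=
    mul_le_mul_of_nonneg_left (pow_le_pow_of_le_one hr0.le hr1.le (by omega)) ha.le
  have har : a * r < 1 := by rwa [lt_div_iff₀ ha, mul_comm] at hra
  have h2r : 2 * r < 2 / a := by rw [lt_div_iff₀ ha]; linarith
  constructor <;> nlinarith [pow_pos hr0 (2 * N)]

end SecularEquation

lemma exists_add_inv_eq {x : ℝ} (hx : 2 < |x|) : ∃ ρ : ℝ, ρ ≠ 0 ∧ |ρ| < 1 ∧ ρ + ρ⁻¹ = x := by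
  have hpos : ∀ y : ℝ, 2 < y → ∃ ρ, 0 < ρ ∧ ρ < 1 ∧ ρ + ρ⁻¹ = y := by
    intro y hy
    have hy0 : 0 < y⁻¹ := inv_pos.2 (by linarith)
    have hcont : ContinuousOn (fun t : ℝ => t + t⁻¹) (Set.Icc y⁻¹ 1) :=
      continuousOn_id.add <| continuousOn_inv₀.mono fun t ht => (hy0.trans_le ht.1).ne'
    have hy : y ∈ Set.Ioo (1 + 1⁻¹) (y⁻¹ + y⁻¹⁻¹) :=
      ⟨by rw [inv_one]; linarith, by rw [inv_inv]; linarith⟩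
    obtain ⟨ρ, ⟨hρ0, hρ1⟩, hρ⟩ :=
      intermediate_value_Ioo' (inv_le_one_of_one_le₀ (by linarith)) hcont hy
    exact ⟨ρ, hy0.trans hρ0, hρ1, hρ⟩
  rcases lt_abs.1 hx with hx | hx
  · obtain ⟨ρ, hρ0, hρ1, hρ⟩ := hpos x hx
    exact ⟨ρ, hρ0.ne', by rwa [abs_of_pos hρ0], hρ⟩
  · obtain ⟨ρ, hρ0, hρ1, hρ⟩ := hpos (-x) hx
    exact ⟨-ρ, neg_ne_zero.2 hρ0.ne', by rwa [abs_neg, abs_of_pos hρ0], by rw [inv_neg]; linarith⟩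

/-- for the rank-one potential `v(j₀) = a > 2` (at a site `j₀ ≥ 3`), the set of
real eigenvalues `λ` of `H` with `|λ| > 2` is a singleton `{λ_a}`, and
`a < λ_a < a + 2/a`. -/
theorem stmt_6 (j₀ : ℕ) (hj₀ : 3 ≤ j₀) (a : ℝ) (ha : 2 < a)
    (v : ℕ → ℝ) (hv : ∀ n : ℕ, v n = if n + 1 = j₀ then a else 0)
    (H : H2 →L[ℂ] H2)
    (hH : ∀ j l : ℕ, (inner ℂ (e j) (H (e l)) : ℂ) =
      if j = l then (v j : ℂ) else if j = l + 1 ∨ l = j + 1 then 1 else 0) :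
    ∃ lam : ℝ, a < lam ∧ lam < a + 2 / a ∧
      {x : ℝ | 2 < |x| ∧ ∃ u : H2, u ≠ 0 ∧ H u = (x : ℂ) • u} = {lam} := by
  have hN : 2 ≤ j₀ := by omega
  have hEig {ρ : ℝ} := IsSchrodinger.hasEigenvector_iff_of_single_site (ρ := ρ) hH hN hv
  obtain ⟨r, hr0, hra, hroot⟩ := exists_secular_root (by linarith) hN
  have hr1 : r < 1 := hra.trans ((div_lt_one (by linarith)).2 (by linarith))
  have hr : |r| < 1 := by rwa [abs_of_pos hr0]
  have hsec := (hroot r hr).2 rfl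
  obtain ⟨hlow, hupp⟩ := add_inv_mem_Ioo_of_secular (by linarith) (by omega) hr0 hr1 hra hsec
  refine ⟨r + r⁻¹, hlow, hupp, Set.eq_singleton_iff_unique_mem.2 ⟨⟨?_, ?_⟩, ?_⟩⟩
  · rw [abs_of_pos (by linarith)]
    linarith
  · exact (hEig hr0.ne' hr).2 hsec
  · rintro x ⟨hx, hxu⟩
    obtain ⟨ρ, hρ0, hρ1, rfl⟩ := exists_add_inv_eq hx
    rw [(hroot ρ hρ1).1 ((hEig hρ0 hρ1).1 hxu)]
end
end

section
/- Let j₀ ≥ 3 be an integer and a > 2, and let v(n) = a if n = j₀ and v(n) = 0 otherwise. For real λ > 2 set μ₊(λ) = (λ + √(λ²−4))/2 and q(x) = x^{2j₀+1} − a x^{2j₀} − x^{2j₀−1} + a. Then λ > 2 is an eigenvalue of H (i.e. Hu = λu for some nonzero u ∈ ℓ²(ℤ⁺)) if and only if q(μ₊(λ)) = 0. -/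
noncomputable section

/-!
Write `λ = μ + μ⁻¹` with `μ > 1`. Every solution of the eigenvalue equation is a multiple of the
Dirichlet solution `φ` (normalised by `φ 0 = 1`), so `λ` is an eigenvalue iff `φ ∈ ℓ²`. Below the
site of the potential, `φ` is proportional to `μ^(n+1) - μ^-(n+1)`; above it,
`φ (n+1) - μ⁻¹ φ n` gets multiplied by `μ` at each step, so `φ ∈ ℓ²` iff this quantity vanishes
at the site. Matching the two regimes there, that quantity times `(μ - μ⁻¹) μ^j₀` is `q(μ)`.
-/

open Filter Topology
open scoped ENNReal

section Recurrence

variable {R : Type*} [CommRing R]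

def discreteSchrodinger (v u : ℕ → R) : ℕ → R
  | 0 => u 1 + v 0 * u 0
  | j + 1 => u (j + 2) + u j + v (j + 1) * u (j + 1)

/-- The solution of `discreteSchrodinger v u = lam • u` with `u 0 = 1`: in the 1-based indexing of
sites, the solution vanishing at site `0`. -/
def dirichletSolution (v : ℕ → R) (lam : R) : ℕ → R
  | 0 => 1
  | 1 => lam - v 0
  | n + 2 => (lam - v (n + 1)) * dirichletSolution v lam (n + 1) - dirichletSolution v lam n

theorem discreteSchrodinger_eq_smul_iff {v u : ℕ → R} {lam : R} :
    discreteSchrodinger v u = lam • u ↔ u = u 0 • dirichletSolution v lam := by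
  constructor
  · intro h
    have h' := congrFun h
    have key : ∀ n, u n = u 0 * dirichletSolution v lam n ∧
        u (n + 1) = u 0 * dirichletSolution v lam (n + 1) := by
      intro n
      induction n with
      | zero =>
        have := h' 0
        simp only [discreteSchrodinger, Pi.smul_apply, smul_eq_mul] at this
        exact ⟨by simp [dirichletSolution], by simp only [dirichletSolution]; linear_combination this⟩
      | succ n ih =>
        have := h' (n + 1)
        simp only [discreteSchrodinger, Pi.smul_apply, smul_eq_mul] at this
        refine ⟨ih.2, ?_⟩
        simp only [dirichletSolution]
        linear_combination this + (lam - v (n + 1)) * ih.2 - ih.1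
    funext n
    exact (key n).1
  · intro h
    rw [h]
    funext j
    cases j <;> simp [discreteSchrodinger, dirichletSolution] <;> ring

theorem sub_mul_eq_pow_mul_of_recurrence {m m' : R} (hmm' : m * m' = 1) {u : ℕ → R} {p : ℕ}
    (hu : ∀ n, p ≤ n → u (n + 2) + u n = (m + m') * u (n + 1)) (t : ℕ) :
    u (p + t + 1) - m' * u (p + t) = m ^ t * (u (p + 1) - m' * u p) := by
  induction t with
  | zero => simp
  | succ t ih =>
    rw [pow_succ]
    linear_combination hu (p + t) (by omega) + m * ih + u (p + t) * hmm'

theorem eq_pow_mul_of_recurrence {m m' : R} (hmm' : m * m' = 1) {u : ℕ → R} {p : ℕ}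
    (hu : ∀ n, p ≤ n → u (n + 2) + u n = (m + m') * u (n + 1)) (hp : u (p + 1) = m' * u p)
    (t : ℕ) : u (p + t) = m' ^ t * u p := by
  induction t with
  | zero => simp
  | succ t ih =>
    have := sub_mul_eq_pow_mul_of_recurrence hmm' hu t
    rw [hp, sub_self, mul_zero, sub_eq_zero] at this
    rw [← add_assoc, this, ih, pow_succ]
    ring

theorem dirichletSolution_add_two {v : ℕ → R} {lam : R} (n : ℕ) :
    dirichletSolution v lam (n + 2) + dirichletSolution v lam n =
      (lam - v (n + 1)) * dirichletSolution v lam (n + 1) := by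
  simp only [dirichletSolution]; ring

theorem sub_mul_dirichletSolution {m m' : R} (hmm' : m * m' = 1) {v : ℕ → R} {N : ℕ}
    (hv : ∀ n < N, v n = 0) :
    ∀ n ≤ N, (m - m') * dirichletSolution v (m + m') n = m ^ (n + 1) - m' ^ (n + 1) := by
  intro n
  induction n using Nat.strong_induction_on with
  | _ n ih =>
    match n with
    | 0 => intro _; simp [dirichletSolution]
    | 1 => intro hN; simp [dirichletSolution, hv 0 (by omega)]; ring
    | n + 2 =>
      intro hN
      have h1 := ih (n + 1) (by omega) (by omega)
      have h0 := ih n (by omega) (by omega)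
      rw [show dirichletSolution v (m + m') (n + 2) = (m + m' - v (n + 1)) *
          dirichletSolution v (m + m') (n + 1) - dirichletSolution v (m + m') n from rfl,
        hv (n + 1) (by omega)]
      linear_combination (m + m') * h1 - h0 + (m ^ (n + 1) - m' ^ (n + 1)) * hmm'

end Recurrence

theorem Memℓp.tendsto_atTop_zero {E : Type*} [NormedAddCommGroup E] {f : ℕ → E} {r : ℝ≥0∞}
    (hf : Memℓp f r) (hr : 0 < r.toReal) : Tendsto f atTop (𝓝 0) := by
  have h := ((memℓp_gen_iff hr).1 hf).tendsto_atTop_zero.rpow_const (p := r.toReal⁻¹)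
    (Or.inr (inv_nonneg.2 hr.le))
  rw [tendsto_zero_iff_norm_tendsto_zero]
  simpa [← Real.rpow_mul (norm_nonneg _), hr.ne', Real.zero_rpow (inv_ne_zero hr.ne')] using h

section Decay

variable {𝕜 : Type*} [NormedField 𝕜] {m m' : 𝕜}

theorem memℓp_iff_of_recurrence (hmm' : m * m' = 1) (hm' : ‖m'‖ < 1) {u : ℕ → 𝕜} {p : ℕ}
    (hu : ∀ n, p ≤ n → u (n + 2) + u n = (m + m') * u (n + 1)) {r : ℝ≥0∞} (hr : 0 < r.toReal) :
    Memℓp u r ↔ u (p + 1) = m' * u p := by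
  constructor
  · intro h
    have hu0 := h.tendsto_atTop_zero hr
    have hshift : ∀ k, Tendsto (fun t => u (p + t + k)) atTop (𝓝 0) := fun k =>
      hu0.comp (tendsto_atTop_mono (fun t => show t ≤ p + t + k by omega) tendsto_id)
    have hg := (tendsto_pow_atTop_nhds_zero_of_norm_lt_one hm').mul
      ((hshift 1).sub ((hshift 0).const_mul m'))
    have hconst : ∀ t, m' ^ t * (u (p + t + 1) - m' * u (p + t + 0)) = u (p + 1) - m' * u p :=
      fun t => by
        rw [add_zero, sub_mul_eq_pow_mul_of_recurrence hmm' hu t, ← mul_assoc, ← mul_pow,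
          mul_comm m', hmm', one_pow, one_mul]
    simp only [hconst, mul_zero, sub_zero] at hg
    exact sub_eq_zero.1 (tendsto_nhds_unique tendsto_const_nhds hg)
  · intro hp
    apply memℓp_gen
    rw [← summable_nat_add_iff p]
    refine ((summable_geometric_of_lt_one (by positivity)
      (Real.rpow_lt_one (norm_nonneg _) hm' hr)).mul_left (‖u p‖ ^ r.toReal)).congr fun t => ?_
    rw [add_comm t p, eq_pow_mul_of_recurrence hmm' hu hp t, norm_mul, norm_pow,
      Real.mul_rpow (by positivity) (norm_nonneg _), Real.rpow_pow_comm (norm_nonneg _), mul_comm]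

theorem memℓp_dirichletSolution_iff (hmm' : m * m' = 1) (hm' : ‖m'‖ < 1) {v : ℕ → 𝕜} {s : ℕ}
    (hv : ∀ n, n ≠ s + 1 → v n = 0) {r : ℝ≥0∞} (hr : 0 < r.toReal) :
    Memℓp (dirichletSolution v (m + m')) r ↔
      m ^ (2 * s + 5) - v (s + 1) * m ^ (2 * s + 4) - m ^ (2 * s + 3) + v (s + 1) = 0 := by
  set φ := dirichletSolution v (m + m')
  have hm : m ≠ 0 := left_ne_zero_of_mul_eq_one hmm'
  have hm_sub : m - m' ≠ 0 := by
    intro h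
    rw [sub_eq_zero.1 h] at hmm'
    have : ‖m'‖ * ‖m'‖ = 1 := by rw [← norm_mul, hmm', norm_one]
    nlinarith [norm_nonneg m']
  have hrec : ∀ n, s + 1 ≤ n → φ (n + 2) + φ n = (m + m') * φ (n + 1) := fun n hn => by
    rw [dirichletSolution_add_two, hv (n + 1) (by omega), sub_zero]
  have hleft := sub_mul_dirichletSolution hmm' (N := s + 1) (fun n hn => hv n (by omega))
  have hs1 := hleft (s + 1) le_rfl
  have hs0 := hleft s (by omega)
  have hsite : φ (s + 2) = (m + m' - v (s + 1)) * φ (s + 1) - φ s := rfl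
  have hpow : ∀ k, m ^ k * m' ^ k = 1 := fun k => by rw [← mul_pow, hmm', one_pow]
  have key : m ^ (2 * s + 5) - v (s + 1) * m ^ (2 * s + 4) - m ^ (2 * s + 3) + v (s + 1) =
      (m - m') * m ^ (s + 2) * (φ (s + 2) - m' * φ (s + 1)) := by
    rw [hsite]
    linear_combination (-m ^ (s + 2) * (m - v (s + 1))) * hs1 + m ^ (s + 2) * hs0 +
      (m - v (s + 1)) * hpow (s + 2) - m * hpow (s + 1)
  rw [memℓp_iff_of_recurrence hmm' hm' hrec hr, key,
    mul_eq_zero, or_iff_right (mul_ne_zero hm_sub (pow_ne_zero _ hm)), sub_eq_zero]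

end Decay

theorem hasSum_inner_e_mul (T : H2 →L[ℂ] H2) (u : H2) (j : ℕ) :
    HasSum (fun n => inner ℂ (e j) (T (e n)) * u n) (T u j) := by
  have hs := (lp.hasSum_single (by norm_num : (2 : ℝ≥0∞) ≠ ⊤) u).mapL ((innerSL ℂ (e j)).comp T)
  have hsingle : ∀ n, lp.single 2 n (u n) = u n • e n := fun n => by
    rw [e, ← lp.single_smul, smul_eq_mul, mul_one]
  simpa [hsingle, e, lp.inner_single_left, mul_comm] using hs

section Operator

variable {v : ℕ → ℝ} {H : H2 →L[ℂ] H2}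

theorem coeFn_apply_eq_discreteSchrodinger
    (hH : ∀ j l : ℕ, (inner ℂ (e j) (H (e l)) : ℂ) =
      if j = l then (v j : ℂ) else if j = l + 1 ∨ l = j + 1 then 1 else 0) (u : H2) :
    ⇑(H u) = discreteSchrodinger (fun n => (v n : ℂ)) ⇑u := by
  funext j
  refine (hasSum_inner_e_mul H u j).unique ?_
  simp only [hH]
  cases j with
  | zero =>
    convert hasSum_sum_of_ne_finset_zero (L := .unconditional ℕ) (s := {0, 1}) ?_ using 1
    · simp [discreteSchrodinger, add_comm]
    · intro n hn
      simp only [Finset.mem_insert, Finset.mem_singleton, not_or] at hn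
      simp [Ne.symm hn.1, hn.2]
  | succ k =>
    convert hasSum_sum_of_ne_finset_zero (L := .unconditional ℕ) (s := {k, k + 1, k + 2}) ?_ using 1
    · simp [discreteSchrodinger]; ring
    · intro n hn
      simp only [Finset.mem_insert, Finset.mem_singleton, not_or] at hn
      simp [show k + 1 ≠ n by omega, show k ≠ n by omega, show n ≠ k + 1 + 1 by omega]

theorem exists_eigenvector_iff_memℓp_dirichletSolution
    (hH : ∀ j l : ℕ, (inner ℂ (e j) (H (e l)) : ℂ) =
      if j = l then (v j : ℂ) else if j = l + 1 ∨ l = j + 1 then 1 else 0) (lam : ℂ) :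
    (∃ u : H2, u ≠ 0 ∧ H u = lam • u) ↔ Memℓp (dirichletSolution (fun n => (v n : ℂ)) lam) 2 := by
  have eig : ∀ u : H2, H u = lam • u ↔ ⇑u = u 0 • dirichletSolution (fun n => (v n : ℂ)) lam :=
    fun u => by
      rw [← discreteSchrodinger_eq_smul_iff, ← coeFn_apply_eq_discreteSchrodinger hH, ← lp.coeFn_smul]
      exact ⟨congrArg _, lp.ext⟩
  constructor
  · rintro ⟨u, hu0, hu⟩
    have hu := (eig u).1 hu
    have hu00 : u 0 ≠ 0 := fun h0 => hu0 (lp.ext (by rw [hu, h0, zero_smul]; rfl))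
    rw [(eq_inv_smul_iff₀ hu00).2 hu.symm]
    exact (lp.memℓp u).const_smul _
  · intro hφ
    refine ⟨⟨_, hφ⟩, fun h => ?_, (eig _).2 ?_⟩
    · have := congrArg (fun w : H2 => w 0) h
      simp [dirichletSolution] at this
    · simp [dirichletSolution]

end Operator

theorem stmt_14_general (j₀ : ℕ) (hj₀ : 3 ≤ j₀) (a : ℝ)
    (v : ℕ → ℝ) (hv : ∀ n : ℕ, v n = if n + 1 = j₀ then a else 0)
    (H : H2 →L[ℂ] H2)
    (hH : ∀ j l : ℕ, (inner ℂ (e j) (H (e l)) : ℂ) =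
      if j = l then (v j : ℂ) else if j = l + 1 ∨ l = j + 1 then 1 else 0)
    (lam : ℝ) (hlam : 2 < lam) :
    (∃ u : H2, u ≠ 0 ∧ H u = (lam : ℂ) • u) ↔
      ((lam + Real.sqrt (lam ^ 2 - 4)) / 2) ^ (2 * j₀ + 1) -
          a * ((lam + Real.sqrt (lam ^ 2 - 4)) / 2) ^ (2 * j₀) -
          ((lam + Real.sqrt (lam ^ 2 - 4)) / 2) ^ (2 * j₀ - 1) + a = 0 := by
  obtain ⟨s, rfl⟩ : ∃ s, j₀ = s + 2 := ⟨j₀ - 2, by omega⟩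
  set μ := (lam + Real.sqrt (lam ^ 2 - 4)) / 2 with hμ_def
  have hsqrt : Real.sqrt (lam ^ 2 - 4) ^ 2 = lam ^ 2 - 4 := Real.sq_sqrt (by nlinarith)
  have hμ : 1 < μ := by rw [hμ_def]; linarith [Real.sqrt_nonneg (lam ^ 2 - 4)]
  have hlam_eq : (lam : ℂ) = μ + (μ : ℂ)⁻¹ := by
    have : lam = μ + μ⁻¹ := by
      field_simp
      linear_combination -hsqrt / 4
    exact_mod_cast this
  have hμμ : (μ : ℂ) * (μ : ℂ)⁻¹ = 1 := mul_inv_cancel₀ (by exact_mod_cast (by linarith : μ ≠ 0))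
  have hμ_inv : ‖(μ : ℂ)⁻¹‖ < 1 := by
    rw [norm_inv, Complex.norm_real, Real.norm_of_nonneg (by linarith)]
    exact inv_lt_one_of_one_lt₀ hμ
  have hv_site : ∀ n, n ≠ s + 1 → (v n : ℂ) = 0 := fun n hn => by
    rw [hv n, if_neg (by omega), Complex.ofReal_zero]
  rw [exists_eigenvector_iff_memℓp_dirichletSolution hH, hlam_eq,
    memℓp_dirichletSolution_iff hμμ hμ_inv hv_site (by norm_num), hv (s + 1), if_pos rfl,
    show 2 * (s + 2) - 1 = 2 * s + 3 by omega, show 2 * (s + 2) + 1 = 2 * s + 5 by ring,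
    show 2 * (s + 2) = 2 * s + 4 by ring]
  norm_cast

/-- for the rank-one potential `v(j₀) = a > 2` (at a site `j₀ ≥ 3`), a real
`λ > 2` is an eigenvalue of `H` iff `q(μ₊(λ)) = 0`, where `μ₊(λ) = (λ + √(λ²−4))/2` and
`q(x) = x^{2j₀+1} − a x^{2j₀} − x^{2j₀−1} + a`. -/
theorem stmt_14 (j₀ : ℕ) (hj₀ : 3 ≤ j₀) (a : ℝ) (ha : 2 < a)
    (v : ℕ → ℝ) (hv : ∀ n : ℕ, v n = if n + 1 = j₀ then a else 0)
    (H : H2 →L[ℂ] H2)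
    (hH : ∀ j l : ℕ, (inner ℂ (e j) (H (e l)) : ℂ) =
      if j = l then (v j : ℂ) else if j = l + 1 ∨ l = j + 1 then 1 else 0)
    (lam : ℝ) (hlam : 2 < lam) :
    (∃ u : H2, u ≠ 0 ∧ H u = (lam : ℂ) • u) ↔
      ((lam + Real.sqrt (lam ^ 2 - 4)) / 2) ^ (2 * j₀ + 1) -
          a * ((lam + Real.sqrt (lam ^ 2 - 4)) / 2) ^ (2 * j₀) -
          ((lam + Real.sqrt (lam ^ 2 - 4)) / 2) ^ (2 * j₀ - 1) + a = 0 :=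
  stmt_14_general j₀ hj₀ a v hv H hH lam hlam

end
end
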